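/- There is no constant C > 0 such that for all v ∈ W^{2,2}(B₁(0)) one has min_{a ∈ ℝ²} ∫_{B₁} |∇v ⊗ ∇v − a ⊗ a|² dx ≤ C ∫_{B₁} |∇²v|² dx. In fact, for v_n(x) = n(x₁+x₂) + (1/2)(x₁+x₂)², the right-hand side is bounded (equal to 4·|B₁|) while the left-hand side tends to infinity like n² as n → ∞. -/

import Mathlib

open MeasureTheory

/-- The `i`-th partial derivative of `v : ℝ² → ℝ`. -/
noncomputable def gradE (v : EuclideanSpace ℝ (Fin 2) → ℝ) (x : EuclideanSpace ℝ (Fin 2))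
    (i : Fin 2) : ℝ :=
  fderiv ℝ v x (EuclideanSpace.single i 1)

/-- The `(i,j)` entry of the Hessian of `v : ℝ² → ℝ`. -/
noncomputable def hessE (v : EuclideanSpace ℝ (Fin 2) → ℝ) (x : EuclideanSpace ℝ (Fin 2))
    (i j : Fin 2) : ℝ :=
  fderiv ℝ (fun y => gradE v y i) x (EuclideanSpace.single j 1)

/-- The counterexample sequence `v_n(x) = n(x₁+x₂) + (1/2)(x₁+x₂)²`. -/
noncomputable def vEx (n : ℕ) : EuclideanSpace ℝ (Fin 2) → ℝ :=
  fun x => (n : ℝ) * (x 0 + x 1) + (1/2) * (x 0 + x 1) ^ 2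

/-! The gradient of `v_n` is `(n + s)(1, 1)` with `s = x₁ + x₂`, so every entry of
`∇v_n ⊗ ∇v_n` is `(n + s)²`, while the Hessian is the constant all-ones matrix. Whatever `a` is,
the `(1,1)` entry alone contributes `∫ ((n + s)² - a₁²)²`. Pairing `x` with `-x` and using
`A² + B² ≥ (A - B)² / 2` with `A - B = 4ns` bounds this below by `4n² ∫ s²`, which is positive
because `s` vanishes only on a line. -/

open Metric Filter

section NormedAddCommGroup

variable {E : Type*} [NormedAddCommGroup E] [MeasurableSpace E] [BorelSpace E]

theorem setIntegral_ball_comp_neg (μ : Measure E) [μ.IsNegInvariant] (g : E → ℝ) (r : ℝ) :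
    ∫ x in ball 0 r, g (-x) ∂μ = ∫ x in ball 0 r, g x ∂μ := by
  simpa [Set.neg_preimage] using
    (Measure.measurePreserving_neg μ).setIntegral_preimage_emb measurableEmbedding_neg g (ball 0 r)

theorem Continuous.integrableOn_ball [ProperSpace E] {μ : Measure E} [IsFiniteMeasureOnCompacts μ]
    {f : E → ℝ} (hf : Continuous f) (r : ℝ) : IntegrableOn f (ball 0 r) μ :=
  (hf.continuousOn.integrableOn_compact (isCompact_closedBall 0 r)).mono_set ball_subset_closedBall

end NormedAddCommGroup

theorem eight_mul_sq_mul_sq_le (c y t : ℝ) :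
    8 * c ^ 2 * y ^ 2 ≤ ((c + y) ^ 2 - t) ^ 2 + ((c - y) ^ 2 - t) ^ 2 := by
  nlinarith [sq_nonneg ((c + y) ^ 2 + (c - y) ^ 2 - 2 * t)]

section NormedSpace

variable {E : Type*} [NormedAddCommGroup E] [NormedSpace ℝ E]

theorem hasFDerivAt_mul_add_half_sq (ℓ : E →L[ℝ] ℝ) (c : ℝ) (x : E) :
    HasFDerivAt (fun y => c * ℓ y + 1 / 2 * ℓ y ^ 2) ((c + ℓ x) • ℓ) x :=
  ((ℓ.hasFDerivAt.const_mul c).add ((ℓ.hasFDerivAt.pow 2).const_mul (1 / 2))).congr_fderiv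
    (by ext; simp; ring)

variable [MeasurableSpace E] [BorelSpace E]

theorem mul_sq_setIntegral_sq_le [ProperSpace E] (μ : Measure E) [μ.IsNegInvariant]
    [IsFiniteMeasureOnCompacts μ] (ℓ : E →L[ℝ] ℝ) (c t r : ℝ) :
    4 * c ^ 2 * ∫ x in ball 0 r, ℓ x ^ 2 ∂μ ≤ ∫ x in ball 0 r, ((c + ℓ x) ^ 2 - t) ^ 2 ∂μ := by
  set g : E → ℝ := fun x => ((c + ℓ x) ^ 2 - t) ^ 2
  have hg : IntegrableOn g (ball 0 r) μ := Continuous.integrableOn_ball (by fun_prop) r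
  have hg_neg : IntegrableOn (fun x => g (-x)) (ball 0 r) μ :=
    Continuous.integrableOn_ball (by simp only [g, map_neg]; fun_prop) r
  have h_sym : ∫ x in ball 0 r, 8 * c ^ 2 * ℓ x ^ 2 ∂μ ≤ ∫ x in ball 0 r, (g x + g (-x)) ∂μ :=
    setIntegral_mono_on (Continuous.integrableOn_ball (by fun_prop) r) (hg.add hg_neg)
      measurableSet_ball fun x _ => by
        simpa [g, sub_eq_add_neg] using eight_mul_sq_mul_sq_le c (ℓ x) t
  rw [integral_const_mul, integral_add hg hg_neg, setIntegral_ball_comp_neg] at h_sym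
  linarith

theorem setIntegral_sq_pos [FiniteDimensional ℝ E] (μ : Measure E) [μ.IsAddHaarMeasure]
    {ℓ : E →L[ℝ] ℝ} (hℓ : ℓ ≠ 0) {r : ℝ} (hr : 0 < r) : 0 < ∫ x in ball 0 r, ℓ x ^ 2 ∂μ := by
  rw [setIntegral_pos_iff_support_of_nonneg_ae (ae_of_all _ fun x => sq_nonneg _)
    (Continuous.integrableOn_ball (by fun_prop) r)]
  have hker : μ (LinearMap.ker (ℓ : E →ₗ[ℝ] ℝ)) = 0 :=
    Measure.addHaar_submodule μ _ (by
      rwa [Ne, LinearMap.ker_eq_top, ← ContinuousLinearMap.toLinearMap_zero,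
        ContinuousLinearMap.coe_inj])
  have hsupp : Function.support (fun x => ℓ x ^ 2) ∩ ball 0 r
      = ball 0 r \ LinearMap.ker (ℓ : E →ₗ[ℝ] ℝ) := by
    ext x; simp [and_comm]
  rw [hsupp, measure_sdiff_null hker]
  exact measure_ball_pos μ 0 hr

end NormedSpace

noncomputable def coordSum : EuclideanSpace ℝ (Fin 2) →L[ℝ] ℝ :=
  EuclideanSpace.proj 0 + EuclideanSpace.proj 1

theorem coordSum_single (i : Fin 2) : coordSum (EuclideanSpace.single i 1) = 1 := by
  fin_cases i <;> simp [coordSum]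

theorem coordSum_ne_zero : coordSum ≠ 0 := fun h => by
  simpa [h] using coordSum_single 0

theorem vEx_eq (n : ℕ) : vEx n = fun x => (n : ℝ) * coordSum x + 1 / 2 * coordSum x ^ 2 := rfl

theorem contDiff_vEx (n : ℕ) : ContDiff ℝ 2 (vEx n) := by
  rw [vEx_eq]; fun_prop

theorem gradE_vEx (n : ℕ) (x : EuclideanSpace ℝ (Fin 2)) (i : Fin 2) :
    gradE (vEx n) x i = n + coordSum x := by
  rw [gradE, vEx_eq, (hasFDerivAt_mul_add_half_sq coordSum n x).fderiv]
  simp [coordSum_single]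

theorem hessE_vEx (n : ℕ) (x : EuclideanSpace ℝ (Fin 2)) (i j : Fin 2) :
    hessE (vEx n) x i j = 1 := by
  simp only [hessE, gradE_vEx]
  rw [((coordSum.hasFDerivAt (x := x)).const_add (n : ℝ)).fderiv, coordSum_single]

theorem setIntegral_hessE_vEx (n : ℕ) :
    ∫ x in ball (0 : EuclideanSpace ℝ (Fin 2)) 1, ∑ i : Fin 2, ∑ j : Fin 2, hessE (vEx n) x i j ^ 2
      = 4 * (volume (ball (0 : EuclideanSpace ℝ (Fin 2)) 1)).toReal := by
  norm_num [hessE_vEx, Measure.real, mul_comm]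

theorem mul_sq_le_setIntegral_gradE_vEx (n : ℕ) (a : Fin 2 → ℝ) :
    4 * (n : ℝ) ^ 2 * ∫ x in ball (0 : EuclideanSpace ℝ (Fin 2)) 1, coordSum x ^ 2
      ≤ ∫ x in ball (0 : EuclideanSpace ℝ (Fin 2)) 1,
          ∑ i : Fin 2, ∑ j : Fin 2, (gradE (vEx n) x i * gradE (vEx n) x j - a i * a j) ^ 2 := by
  refine (mul_sq_setIntegral_sq_le volume coordSum n (a 0 * a 0) 1).trans ?_
  simp only [gradE_vEx]
  refine setIntegral_mono_on (Continuous.integrableOn_ball (by fun_prop) 1)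
    (Continuous.integrableOn_ball (by fun_prop) 1) measurableSet_ball fun x _ => ?_
  simp only [Fin.sum_univ_two]
  nlinarith [sq_nonneg ((n + coordSum x) * (n + coordSum x) - a 0 * a 1),
    sq_nonneg ((n + coordSum x) * (n + coordSum x) - a 1 * a 0),
    sq_nonneg ((n + coordSum x) * (n + coordSum x) - a 1 * a 1)]

/-- There is no constant `C > 0` such that
`min_{a∈ℝ²} ∫_{B₁}|∇v⊗∇v − a⊗a|² ≤ C∫_{B₁}|∇²v|²` for all `v`; indeed for
`v_n(x) = n(x₁+x₂) + (1/2)(x₁+x₂)²` the right-hand side equals `4|B₁|` while the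
left-hand side tends to infinity. -/
theorem no_full_coercivity_vonKarman :
    (¬ ∃ C > (0:ℝ), ∀ v : EuclideanSpace ℝ (Fin 2) → ℝ, ContDiff ℝ 2 v →
      ∃ a : Fin 2 → ℝ,
        (∫ x in Metric.ball (0 : EuclideanSpace ℝ (Fin 2)) 1,
          ∑ i : Fin 2, ∑ j : Fin 2, (gradE v x i * gradE v x j - a i * a j) ^ 2)
        ≤ C * ∫ x in Metric.ball (0 : EuclideanSpace ℝ (Fin 2)) 1,
            ∑ i : Fin 2, ∑ j : Fin 2, (hessE v x i j) ^ 2) ∧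
    (∀ n : ℕ,
      (∫ x in Metric.ball (0 : EuclideanSpace ℝ (Fin 2)) 1,
        ∑ i : Fin 2, ∑ j : Fin 2, (hessE (vEx n) x i j) ^ 2)
      = 4 * (volume (Metric.ball (0 : EuclideanSpace ℝ (Fin 2)) 1)).toReal) ∧
    (∀ M : ℝ, ∃ N : ℕ, ∀ n ≥ N, ∀ a : Fin 2 → ℝ,
      M ≤ ∫ x in Metric.ball (0 : EuclideanSpace ℝ (Fin 2)) 1,
        ∑ i : Fin 2, ∑ j : Fin 2, (gradE (vEx n) x i * gradE (vEx n) x j - a i * a j) ^ 2) := by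
  have hK := setIntegral_sq_pos volume coordSum_ne_zero one_pos
  have h_grad : ∀ M : ℝ, ∃ N : ℕ, ∀ n ≥ N, ∀ a : Fin 2 → ℝ,
      M ≤ ∫ x in ball (0 : EuclideanSpace ℝ (Fin 2)) 1,
        ∑ i : Fin 2, ∑ j : Fin 2, (gradE (vEx n) x i * gradE (vEx n) x j - a i * a j) ^ 2 := by
    intro M
    have h_tendsto : Tendsto (fun n : ℕ => 4 * (n : ℝ) ^ 2 *
        ∫ x in ball (0 : EuclideanSpace ℝ (Fin 2)) 1, coordSum x ^ 2) atTop atTop :=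
      (((tendsto_pow_atTop two_ne_zero).comp tendsto_natCast_atTop_atTop).const_mul_atTop
        four_pos).atTop_mul_const hK
    obtain ⟨N, hN⟩ := eventually_atTop.1 (h_tendsto.eventually_ge_atTop M)
    exact ⟨N, fun n hn a => (hN n hn).trans (mul_sq_le_setIntegral_gradE_vEx n a)⟩
  refine ⟨?_, setIntegral_hessE_vEx, h_grad⟩
  rintro ⟨C, -, hC⟩
  obtain ⟨N, hN⟩ := h_grad (C * (4 * (volume (ball (0 : EuclideanSpace ℝ (Fin 2)) 1)).toReal) + 1)
  obtain ⟨a, ha⟩ := hC (vEx N) (contDiff_vEx N)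
  rw [setIntegral_hessE_vEx] at ha
  linarith [hN N le_rfl a]
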